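/- arXiv:2407.20531 — 4 statements merged into one kernel-verified Lean document; each statement's English description precedes it below -/
import Mathlib

section
/- Let n ≥ 1, s > (n+1)/2 and θ > 1/2. There exists a constant C > 0 depending only on n, s, θ such that for every measurable F : ℝ × ℝⁿ → ℂ with ∫_{ℝⁿ}∫_ℝ (1+||τ|−|ξ₁||)^{2θ} (1+|ξ₁|)² (1+|ξ|)^{2(s−1)} |F(τ,ξ)|² dτ dξ < ∞, the integral ∫_ℝ∫_{ℝⁿ} F(τ,ξ) e^{i(tτ + y·ξ)} dξ dτ converges absolutely for every (t,y) ∈ ℝ × ℝⁿ and satisfies |∫_ℝ∫_{ℝⁿ} F(τ,ξ) e^{i(tτ+y·ξ)} dξ dτ| ≤ C ( ∫_{ℝⁿ}∫_ℝ (1+||τ|−|ξ₁||)^{2θ} (1+|ξ₁|)² (1+|ξ|)^{2(s−1)} |F(τ,ξ)|² dτ dξ )^{1/2}. -/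
open MeasureTheory
open scoped RealInnerProductSpace ENNReal


lemma aux_tau (p : ℝ) (r : ℝ) :
    ∫⁻ τ : ℝ, ENNReal.ofReal ((1 + |abs τ - r|) ^ (-p)) ≤
      2 * ∫⁻ u : ℝ, ENNReal.ofReal ((1 + |u|) ^ (-p)) := by
  have hpt : ∀ τ : ℝ, ENNReal.ofReal ((1 + |abs τ - r|) ^ (-p)) ≤
      ENNReal.ofReal ((1 + |τ - r|) ^ (-p)) + ENNReal.ofReal ((1 + |τ + r|) ^ (-p)) := by
    intro τ
    rcases le_or_gt 0 τ with h | h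
    · rw [abs_of_nonneg h]
      exact le_add_of_nonneg_right (by positivity)
    · rw [abs_of_neg h]
      have : |-τ - r| = |τ + r| := by rw [← abs_neg]; ring_nf
      rw [this]
      exact le_add_of_nonneg_left (by positivity)
  calc ∫⁻ τ : ℝ, ENNReal.ofReal ((1 + |abs τ - r|) ^ (-p))
      ≤ ∫⁻ τ : ℝ, (ENNReal.ofReal ((1 + |τ - r|) ^ (-p)) +
          ENNReal.ofReal ((1 + |τ + r|) ^ (-p))) := lintegral_mono hpt
    _ = (∫⁻ τ : ℝ, ENNReal.ofReal ((1 + |τ - r|) ^ (-p))) +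
        ∫⁻ τ : ℝ, ENNReal.ofReal ((1 + |τ + r|) ^ (-p)) := by
        apply lintegral_add_left; fun_prop
    _ = 2 * ∫⁻ u : ℝ, ENNReal.ofReal ((1 + |u|) ^ (-p)) := by
        have h1 : ∫⁻ τ : ℝ, ENNReal.ofReal ((1 + |τ - r|) ^ (-p)) =
            ∫⁻ u : ℝ, ENNReal.ofReal ((1 + |u|) ^ (-p)) := by
          simpa [sub_eq_add_neg] using
            lintegral_add_right_eq_self (fun u : ℝ => ENNReal.ofReal ((1 + |u|) ^ (-p))) (-r)
        have h2 : ∫⁻ τ : ℝ, ENNReal.ofReal ((1 + |τ + r|) ^ (-p)) =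
            ∫⁻ u : ℝ, ENNReal.ofReal ((1 + |u|) ^ (-p)) := by
          simpa using
            lintegral_add_right_eq_self (fun u : ℝ => ENNReal.ofReal ((1 + |u|) ^ (-p))) r
        rw [h1, h2, two_mul]

lemma coord_le_norm {m : ℕ} (ξ : EuclideanSpace ℝ (Fin m)) (i : Fin m) : |ξ i| ≤ ‖ξ‖ := by
  rw [EuclideanSpace.norm_eq]
  have : |ξ i| = Real.sqrt (‖ξ i‖ ^ 2) := by
    rw [Real.sqrt_sq_eq_abs, Real.norm_eq_abs, abs_abs]
  rw [this]
  apply Real.sqrt_le_sqrt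
  exact Finset.single_le_sum (f := fun j => ‖ξ j‖ ^ 2) (fun j _ => sq_nonneg _)
    (Finset.mem_univ i)

lemma aux_xi (m : ℕ) {q : ℝ} (hq : (m : ℝ) < q) :
    ∫⁻ ξ : EuclideanSpace ℝ (Fin (m + 1)),
      ENNReal.ofReal ((1 + |ξ 0|) ^ (-(2:ℝ)) * (1 + ‖ξ‖) ^ (-q)) < ⊤ := by
  have hq0 : 0 ≤ q := le_trans (Nat.cast_nonneg m) hq.le
  have e := (EuclideanSpace.volume_preserving_symm_measurableEquiv_toLp (Fin (m + 1))).symm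
  rw [← e.lintegral_comp (by fun_prop)]
  have hpt : ∀ x : Fin (m + 1) → ℝ,
      ENNReal.ofReal ((1 + |(MeasurableEquiv.toLp 2 (Fin (m+1) → ℝ)) x 0|) ^ (-(2:ℝ)) *
        (1 + ‖(MeasurableEquiv.toLp 2 (Fin (m+1) → ℝ)) x‖) ^ (-q)) ≤
      ENNReal.ofReal ((1 + |x 0|) ^ (-(2:ℝ))) *
        ENNReal.ofReal ((1 + ‖fun j : Fin m => x (Fin.succAbove 0 j)‖) ^ (-q)) := by
    intro x
    have hx0 : (MeasurableEquiv.toLp 2 (Fin (m+1) → ℝ)) x 0 = x 0 := rfl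
    have htail : ‖fun j : Fin m => x (Fin.succAbove 0 j)‖ ≤
        ‖(MeasurableEquiv.toLp 2 (Fin (m+1) → ℝ)) x‖ := by
      rw [pi_norm_le_iff_of_nonneg (norm_nonneg _)]
      intro j
      have := coord_le_norm ((MeasurableEquiv.toLp 2 (Fin (m+1) → ℝ)) x)
        (Fin.succAbove 0 j)
      simpa [Real.norm_eq_abs] using this
    rw [← ENNReal.ofReal_mul (by positivity)]
    apply ENNReal.ofReal_le_ofReal
    rw [hx0]
    apply mul_le_mul_of_nonneg_left _ (by positivity)
    apply Real.rpow_le_rpow_of_nonpos (by positivity) (by linarith) (by linarith)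
  calc ∫⁻ x : Fin (m+1) → ℝ, ENNReal.ofReal
          ((1 + |(MeasurableEquiv.toLp 2 (Fin (m+1) → ℝ)) x 0|) ^ (-(2:ℝ)) *
            (1 + ‖(MeasurableEquiv.toLp 2 (Fin (m+1) → ℝ)) x‖) ^ (-q))
      ≤ ∫⁻ x : Fin (m+1) → ℝ, ENNReal.ofReal ((1 + |x 0|) ^ (-(2:ℝ))) *
          ENNReal.ofReal ((1 + ‖fun j : Fin m => x (Fin.succAbove 0 j)‖) ^ (-q)) :=
        lintegral_mono hpt
    _ = ∫⁻ y : ℝ × (Fin m → ℝ), ENNReal.ofReal ((1 + |y.1|) ^ (-(2:ℝ))) *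
          ENNReal.ofReal ((1 + ‖y.2‖) ^ (-q)) := by
        rw [← (volume_preserving_piFinSuccAbove (fun _ : Fin (m+1) => ℝ) 0).lintegral_comp
          (by fun_prop)]
        rfl
    _ = (∫⁻ u : ℝ, ENNReal.ofReal ((1 + |u|) ^ (-(2:ℝ)))) *
          ∫⁻ v : Fin m → ℝ, ENNReal.ofReal ((1 + ‖v‖) ^ (-q)) := by
        rw [← lintegral_prod_mul (by fun_prop) (by fun_prop)]
        rfl
    _ < ⊤ := by
        apply ENNReal.mul_lt_top
        · have h : ((Module.finrank ℝ ℝ : ℝ)) < 2 := by norm_num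
          simpa [Real.norm_eq_abs] using finite_integral_one_add_norm (E := ℝ) (μ := volume) h
        · have h : ((Module.finrank ℝ (Fin m → ℝ) : ℝ)) < q := by simpa using hq
          exact finite_integral_one_add_norm (μ := volume) h

lemma aux_K (m : ℕ) {s θ : ℝ} (hs : ((m : ℝ) + 1 + 1) / 2 < s) (hθ : 1 / 2 < θ) :
    ∫⁻ p : ℝ × EuclideanSpace ℝ (Fin (m + 1)),
      ENNReal.ofReal ((1 + |abs p.1 - abs (p.2 0)|) ^ (-(2 * θ))) *
        ENNReal.ofReal ((1 + |p.2 0|) ^ (-(2:ℝ)) * (1 + ‖p.2‖) ^ (-(2 * (s - 1)))) < ⊤ := by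
  have hq : (m : ℝ) < 2 * (s - 1) := by linarith
  have hp : 1 < 2 * θ := by linarith
  set J := ∫⁻ u : ℝ, ENNReal.ofReal ((1 + |u|) ^ (-(2 * θ))) with hJdef
  have hJ : J < ⊤ := by
    have h : ((Module.finrank ℝ ℝ : ℝ)) < 2 * θ := by norm_num; linarith
    simpa [Real.norm_eq_abs, hJdef] using
      finite_integral_one_add_norm (E := ℝ) (μ := volume) h
  rw [Measure.volume_eq_prod, lintegral_prod _ (by fun_prop)]
  rw [lintegral_lintegral_swap (by fun_prop)]
  calc ∫⁻ ξ : EuclideanSpace ℝ (Fin (m+1)), ∫⁻ τ : ℝ,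
        ENNReal.ofReal ((1 + |abs τ - abs (ξ 0)|) ^ (-(2 * θ))) *
          ENNReal.ofReal ((1 + |ξ 0|) ^ (-(2:ℝ)) * (1 + ‖ξ‖) ^ (-(2 * (s - 1))))
      = ∫⁻ ξ : EuclideanSpace ℝ (Fin (m+1)),
          (∫⁻ τ : ℝ, ENNReal.ofReal ((1 + |abs τ - abs (ξ 0)|) ^ (-(2 * θ)))) *
            ENNReal.ofReal ((1 + |ξ 0|) ^ (-(2:ℝ)) * (1 + ‖ξ‖) ^ (-(2 * (s - 1)))) := by
        refine lintegral_congr fun ξ => ?_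
        rw [lintegral_mul_const _ (by fun_prop)]
    _ ≤ ∫⁻ ξ : EuclideanSpace ℝ (Fin (m+1)),
          (2 * J) * ENNReal.ofReal ((1 + |ξ 0|) ^ (-(2:ℝ)) * (1 + ‖ξ‖) ^ (-(2 * (s - 1)))) := by
        refine lintegral_mono fun ξ => ?_
        exact mul_le_mul_left (aux_tau (2 * θ) (abs (ξ 0))) _
    _ = (2 * J) * ∫⁻ ξ : EuclideanSpace ℝ (Fin (m+1)),
          ENNReal.ofReal ((1 + |ξ 0|) ^ (-(2:ℝ)) * (1 + ‖ξ‖) ^ (-(2 * (s - 1)))) :=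
        lintegral_const_mul _ (by fun_prop)
    _ < ⊤ := ENNReal.mul_lt_top (by finiteness) (aux_xi m hq)

set_option maxHeartbeats 1000000 in
/-- Fourier-side form of estimate (dr0) of Lemma 3.2:
`‖f‖_{L^∞(ℝ^{1+n})} ≲ ‖f‖_{H^{s-1,1}_θ}` for `s > (n+1)/2`, `θ > 1/2`. -/
theorem stmt_1 (n : ℕ) (hn : 0 < n) (s θ : ℝ) (hs : ((n : ℝ) + 1) / 2 < s)
    (hθ : 1 / 2 < θ) :
    ∃ C : ℝ, 0 < C ∧
      ∀ (F : ℝ × EuclideanSpace ℝ (Fin n) → ℂ), Measurable F →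
        (∫⁻ ξ : EuclideanSpace ℝ (Fin n), ∫⁻ τ : ℝ,
            ENNReal.ofReal ((1 + |abs τ - abs (ξ ⟨0, hn⟩)|) ^ (2 * θ) *
              (1 + |ξ ⟨0, hn⟩|) ^ (2 : ℕ) * (1 + ‖ξ‖) ^ (2 * (s - 1)) *
                ‖F (τ, ξ)‖ ^ 2)) ≠ ⊤ →
        ∀ (t : ℝ) (y : EuclideanSpace ℝ (Fin n)),
          Integrable (fun p : ℝ × EuclideanSpace ℝ (Fin n) =>
            F p * Complex.exp (Complex.I * ((t * p.1 + ⟪y, p.2⟫ : ℝ) : ℂ))) ∧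
          ‖∫ p : ℝ × EuclideanSpace ℝ (Fin n),
              F p * Complex.exp (Complex.I * ((t * p.1 + ⟪y, p.2⟫ : ℝ) : ℂ))‖ ≤
            C * Real.sqrt
              ((∫⁻ ξ : EuclideanSpace ℝ (Fin n), ∫⁻ τ : ℝ,
                ENNReal.ofReal ((1 + |abs τ - abs (ξ ⟨0, hn⟩)|) ^ (2 * θ) *
                  (1 + |ξ ⟨0, hn⟩|) ^ (2 : ℕ) * (1 + ‖ξ‖) ^ (2 * (s - 1)) *
                    ‖F (τ, ξ)‖ ^ 2)).toReal) := by
  obtain ⟨m, rfl⟩ : ∃ m, n = m + 1 := ⟨n - 1, by omega⟩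
  have h0 : (⟨0, hn⟩ : Fin (m + 1)) = 0 := rfl
  -- the weight
  set E := EuclideanSpace ℝ (Fin (m + 1))
  set w : ℝ × E → ℝ := fun p =>
    (1 + |abs p.1 - abs (p.2 0)|) ^ (2 * θ) * (1 + |p.2 0|) ^ (2 : ℕ) *
      (1 + ‖p.2‖) ^ (2 * (s - 1)) with hw
  have hwpos : ∀ p, 0 < w p := by
    intro p
    apply mul_pos (mul_pos _ _)
    · exact Real.rpow_pos_of_pos (by positivity) _
    · exact Real.rpow_pos_of_pos (by positivity) _
    · positivity
  set W : ℝ × E → ℝ≥0∞ := fun p => ENNReal.ofReal (w p) with hW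
  have hW0 : ∀ p, W p ≠ 0 := fun p => by
    exact (ENNReal.ofReal_pos.mpr (hwpos p)).ne'
  have hWtop : ∀ p, W p ≠ ⊤ := fun p => ENNReal.ofReal_ne_top
  have hWmeas : Measurable W := by measurability
  -- the inverse weight and its integral
  have hKinv : ∀ p : ℝ × E, (W p)⁻¹ =
      ENNReal.ofReal ((1 + |abs p.1 - abs (p.2 0)|) ^ (-(2 * θ))) *
        ENNReal.ofReal ((1 + |p.2 0|) ^ (-(2:ℝ)) * (1 + ‖p.2‖) ^ (-(2 * (s - 1)))) := by
    intro p
    rw [← ENNReal.ofReal_mul (by positivity), ← ENNReal.ofReal_inv_of_pos (hwpos p)]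
    congr 1
    rw [hw]
    have h1 : (0:ℝ) < 1 + |abs p.1 - abs (p.2 0)| := by positivity
    have h2 : (0:ℝ) < 1 + |p.2 0| := by positivity
    have h3 : (0:ℝ) < 1 + ‖p.2‖ := by positivity
    rw [mul_inv, mul_inv, Real.rpow_neg h1.le, Real.rpow_neg h2.le, Real.rpow_neg h3.le,
      show ((1 + |p.2 0|) ^ (2:ℝ)) = (1 + |p.2 0|) ^ (2:ℕ) from by
        rw [← Real.rpow_natCast]; norm_num]
    ring
  set K := ∫⁻ p : ℝ × E, (W p)⁻¹ with hKdef
  have hK : K < ⊤ := by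
    rw [hKdef, lintegral_congr hKinv]
    exact aux_K m (by exact_mod_cast hs) hθ
  refine ⟨Real.sqrt K.toReal + 1, by positivity, ?_⟩
  intro F hF hI t y
  set G : ℝ × E → ℝ≥0∞ := fun p => ENNReal.ofReal (w p * ‖F p‖ ^ 2) with hG
  have hGmeas : Measurable G := by measurability
  -- identify the iterated integral with the product integral
  have hprod : ∫⁻ p : ℝ × E, G p =
      ∫⁻ ξ : E, ∫⁻ τ : ℝ,
        ENNReal.ofReal ((1 + |abs τ - abs (ξ ⟨0, hn⟩)|) ^ (2 * θ) *
          (1 + |ξ ⟨0, hn⟩|) ^ (2 : ℕ) * (1 + ‖ξ‖) ^ (2 * (s - 1)) * ‖F (τ, ξ)‖ ^ 2) := by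
    rw [Measure.volume_eq_prod, lintegral_prod _ hGmeas.aemeasurable]
    rw [lintegral_lintegral_swap (by measurability)]
    rfl
  -- pointwise identity : G p = W p * ‖F p‖ₑ ^ 2
  have hGW : ∀ p : ℝ × E, G p = W p * (‖F p‖₊ : ℝ≥0∞) ^ (2:ℝ) := by
    intro p
    show ENNReal.ofReal (w p * ‖F p‖ ^ 2) = _
    rw [ENNReal.ofReal_mul (hwpos p).le,
      show ((‖F p‖₊ : ℝ≥0∞)) ^ (2:ℝ) = ((‖F p‖₊ : ℝ≥0∞)) ^ (2:ℕ) from by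
        rw [← ENNReal.rpow_natCast]; norm_num,
      ← enorm_eq_nnnorm, ← ofReal_norm, ← ENNReal.ofReal_pow (norm_nonneg _)]
  -- Cauchy-Schwarz
  have hCS : ∫⁻ p : ℝ × E, (‖F p‖₊ : ℝ≥0∞) ≤
      K ^ ((1:ℝ)/2) * (∫⁻ p : ℝ × E, G p) ^ ((1:ℝ)/2) := by
    have h22 : Real.HolderConjugate 2 2 := Real.HolderConjugate.two_two
    have hfg : ∀ p : ℝ × E, (‖F p‖₊ : ℝ≥0∞) =
        ((fun p => (W p) ^ (-(1:ℝ)/2)) * fun p => (W p) ^ ((1:ℝ)/2) * (‖F p‖₊ : ℝ≥0∞)) p := by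
      intro p
      simp only [Pi.mul_apply]
      rw [← mul_assoc, ← ENNReal.rpow_add _ _ (hW0 p) (hWtop p),
        show (-(1:ℝ)/2 + (1:ℝ)/2 : ℝ) = 0 by norm_num, ENNReal.rpow_zero, one_mul]
    calc ∫⁻ p : ℝ × E, (‖F p‖₊ : ℝ≥0∞)
        = ∫⁻ p : ℝ × E, ((fun p => (W p) ^ (-(1:ℝ)/2)) *
            fun p => (W p) ^ ((1:ℝ)/2) * (‖F p‖₊ : ℝ≥0∞)) p := lintegral_congr hfg
      _ ≤ (∫⁻ p : ℝ × E, ((W p) ^ (-(1:ℝ)/2)) ^ (2:ℝ)) ^ ((1:ℝ)/2) *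
          (∫⁻ p : ℝ × E, ((W p) ^ ((1:ℝ)/2) * (‖F p‖₊ : ℝ≥0∞)) ^ (2:ℝ)) ^ ((1:ℝ)/2) :=
          ENNReal.lintegral_mul_le_Lp_mul_Lq volume h22 (hWmeas.pow_const _).aemeasurable
            ((hWmeas.pow_const _).mul hF.nnnorm.coe_nnreal_ennreal).aemeasurable
      _ = K ^ ((1:ℝ)/2) * (∫⁻ p : ℝ × E, G p) ^ ((1:ℝ)/2) := by
          congr 1
          · congr 1
            refine lintegral_congr fun p => ?_
            rw [← ENNReal.rpow_mul, show (-(1:ℝ)/2 * 2 : ℝ) = -1 by norm_num,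
              ENNReal.rpow_neg_one]
          · congr 1
            refine lintegral_congr fun p => ?_
            rw [ENNReal.mul_rpow_of_nonneg _ _ (by norm_num : (0:ℝ) ≤ 2),
              ← ENNReal.rpow_mul, show ((1:ℝ)/2 * 2 : ℝ) = 1 by norm_num,
              ENNReal.rpow_one, hGW p]
  rw [← hprod] at hI ⊢
  -- properties of the integrand
  set h : ℝ × E → ℂ := fun p =>
    F p * Complex.exp (Complex.I * ((t * p.1 + ⟪y, p.2⟫ : ℝ) : ℂ)) with hh
  have hnorm : ∀ p, ‖h p‖ = ‖F p‖ := by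
    intro p
    rw [hh]
    simp only [norm_mul]
    have : ‖Complex.exp (Complex.I * ((t * p.1 + ⟪y, p.2⟫ : ℝ) : ℂ))‖ = 1 := by
      rw [Complex.norm_exp]; simp
    rw [this, mul_one]
  have hmeas_h : AEStronglyMeasurable h volume := by
    apply Measurable.aestronglyMeasurable
    apply hF.mul
    apply Complex.measurable_exp.comp
    apply (measurable_const.mul _)
    apply Complex.measurable_ofReal.comp
    have : Continuous fun p : ℝ × E => ⟪y, p.2⟫ :=
      Continuous.inner continuous_const continuous_snd
    exact ((measurable_fst.const_mul t).add this.measurable)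
  have hbound : ∫⁻ p : ℝ × E, (‖h p‖₊ : ℝ≥0∞) ≤
      K ^ ((1:ℝ)/2) * (∫⁻ p : ℝ × E, G p) ^ ((1:ℝ)/2) := by
    refine le_trans (le_of_eq (lintegral_congr fun p => ?_)) hCS
    rw [← enorm_eq_nnnorm, ← enorm_eq_nnnorm, ← ofReal_norm, ← ofReal_norm, hnorm p]
  have hfin : (K ^ ((1:ℝ)/2) * (∫⁻ p : ℝ × E, G p) ^ ((1:ℝ)/2)) ≠ ⊤ :=
    ENNReal.mul_ne_top (ENNReal.rpow_lt_top_of_nonneg (by norm_num) hK.ne).ne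
      (ENNReal.rpow_lt_top_of_nonneg (by norm_num) hI).ne
  have hint : Integrable h := by
    refine ⟨hmeas_h, ?_⟩
    rw [HasFiniteIntegral]
    exact lt_of_le_of_lt hbound hfin.lt_top
  refine ⟨hint, ?_⟩
  calc ‖∫ p : ℝ × E, h p‖
      ≤ (∫⁻ p : ℝ × E, ENNReal.ofReal ‖h p‖).toReal := norm_integral_le_lintegral_norm h
    _ ≤ (K ^ ((1:ℝ)/2) * (∫⁻ p : ℝ × E, G p) ^ ((1:ℝ)/2)).toReal := by
        apply ENNReal.toReal_mono hfin
        refine le_trans (le_of_eq (lintegral_congr fun p => ?_)) hCS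
        rw [hnorm p, ofReal_norm, enorm_eq_nnnorm]
    _ = Real.sqrt K.toReal * Real.sqrt (∫⁻ p : ℝ × E, G p).toReal := by
        rw [ENNReal.toReal_mul, Real.sqrt_eq_rpow, Real.sqrt_eq_rpow,
          ENNReal.toReal_rpow, ENNReal.toReal_rpow]
    _ ≤ (Real.sqrt K.toReal + 1) * Real.sqrt (∫⁻ p : ℝ × E, G p).toReal := by
        apply mul_le_mul_of_nonneg_right _ (Real.sqrt_nonneg _)
        linarith
end

section
/- Let n ≥ 1, s ∈ ℝ, θ > 1/2 and let σ ∈ {+1, −1}. For all measurable functions g : ℝ → ℂ and h : ℝⁿ → ℂ, one has ∫_{ℝⁿ} ∫_ℝ (1+|ξ|)^{2(s−1)} (1+|ξ₁|)² (1+||τ|−|ξ₁||)^{2θ} |g(τ − σ|ξ₁|)|² |h(ξ)|² dτ dξ ≤ ( ∫_ℝ (1+|λ|)^{2θ} |g(λ)|² dλ ) · ( ∫_{ℝⁿ} (1+|ξ|)^{2(s−1)} (1+|ξ₁|)² |h(ξ)|² dξ ). -/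
open MeasureTheory

/-- Fourier-side form of estimate (cr0) of Lemma 4.2:
`‖χ(t)e^{±itD}f‖_{H^{s-1,1}_θ} ≤ ‖χ‖_{H^θ(ℝ)} ‖f‖_{H^{s-1,1}(ℝⁿ)}`. -/
theorem stmt_7 (n : ℕ) (hn : 0 < n) (s θ : ℝ) (hθ : 1 / 2 < θ)
    (σ : ℝ) (hσ : σ = 1 ∨ σ = -1)
    (g : ℝ → ℂ) (h : EuclideanSpace ℝ (Fin n) → ℂ)
    (hg : Measurable g) (hh : Measurable h) :
    (∫⁻ ξ : EuclideanSpace ℝ (Fin n), ∫⁻ τ : ℝ,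
        ENNReal.ofReal ((1 + ‖ξ‖) ^ (2 * (s - 1)) * (1 + |ξ ⟨0, hn⟩|) ^ (2 : ℕ) *
          (1 + |abs τ - abs (ξ ⟨0, hn⟩)|) ^ (2 * θ) *
            (‖g (τ - σ * |ξ ⟨0, hn⟩|)‖ ^ 2 * ‖h ξ‖ ^ 2))) ≤
      (∫⁻ lam : ℝ, ENNReal.ofReal ((1 + |lam|) ^ (2 * θ) * ‖g lam‖ ^ 2)) *
        ∫⁻ ξ : EuclideanSpace ℝ (Fin n),
          ENNReal.ofReal ((1 + ‖ξ‖) ^ (2 * (s - 1)) * (1 + |ξ ⟨0, hn⟩|) ^ (2 : ℕ) *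
            ‖h ξ‖ ^ 2) := by
  set I : ENNReal := ∫⁻ lam : ℝ, ENNReal.ofReal ((1 + |lam|) ^ (2 * θ) * ‖g lam‖ ^ 2) with hI
  have h2θ : (0:ℝ) < 2 * θ := by linarith
  have key : ∀ ξ : EuclideanSpace ℝ (Fin n),
      (∫⁻ τ : ℝ, ENNReal.ofReal ((1 + ‖ξ‖) ^ (2 * (s - 1)) * (1 + |ξ ⟨0, hn⟩|) ^ (2 : ℕ) *
          (1 + |abs τ - abs (ξ ⟨0, hn⟩)|) ^ (2 * θ) *
            (‖g (τ - σ * |ξ ⟨0, hn⟩|)‖ ^ 2 * ‖h ξ‖ ^ 2))) ≤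
        I * ENNReal.ofReal ((1 + ‖ξ‖) ^ (2 * (s - 1)) * (1 + |ξ ⟨0, hn⟩|) ^ (2 : ℕ) *
            ‖h ξ‖ ^ 2) := by
    intro ξ
    set a : ℝ := ξ ⟨0, hn⟩ with ha
    set A : ℝ := (1 + ‖ξ‖) ^ (2 * (s - 1)) * (1 + |a|) ^ (2 : ℕ) with hA
    set b : ℝ := σ * |a| with hb
    have hA0 : 0 ≤ A := by positivity
    have step1 : (∫⁻ τ : ℝ, ENNReal.ofReal (A *
          (1 + |abs τ - abs a|) ^ (2 * θ) * (‖g (τ - b)‖ ^ 2 * ‖h ξ‖ ^ 2))) ≤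
        ∫⁻ τ : ℝ, ENNReal.ofReal (A *
          (1 + |τ - b|) ^ (2 * θ) * (‖g (τ - b)‖ ^ 2 * ‖h ξ‖ ^ 2)) := by
      refine lintegral_mono fun τ => ENNReal.ofReal_le_ofReal ?_
      have habs : |abs τ - abs a| ≤ |τ - b| := by
        have h1 : |b| = |a| := by
          rcases hσ with h' | h' <;>
            simp [hb, h', abs_mul, abs_abs]
        have h2 := abs_abs_sub_abs_le_abs_sub τ b
        rwa [h1] at h2
      have hpow : (1 + |abs τ - abs a|) ^ (2 * θ) ≤ (1 + |τ - b|) ^ (2 * θ) := by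
        apply Real.rpow_le_rpow (by positivity) (by linarith) (le_of_lt h2θ)
      have := mul_le_mul_of_nonneg_right (mul_le_mul_of_nonneg_left hpow hA0)
        (by positivity : (0:ℝ) ≤ ‖g (τ - b)‖ ^ 2 * ‖h ξ‖ ^ 2)
      exact this
    have step2 : (∫⁻ τ : ℝ, ENNReal.ofReal (A *
          (1 + |τ - b|) ^ (2 * θ) * (‖g (τ - b)‖ ^ 2 * ‖h ξ‖ ^ 2))) =
        ENNReal.ofReal (A * ‖h ξ‖ ^ 2) * I := by
      have heq : ∀ τ : ℝ, ENNReal.ofReal (A *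
            (1 + |τ - b|) ^ (2 * θ) * (‖g (τ - b)‖ ^ 2 * ‖h ξ‖ ^ 2)) =
          ENNReal.ofReal (A * ‖h ξ‖ ^ 2) *
            ENNReal.ofReal ((1 + |τ - b|) ^ (2 * θ) * ‖g (τ - b)‖ ^ 2) := by
        intro τ
        rw [← ENNReal.ofReal_mul (by positivity)]
        ring_nf
      simp_rw [heq]
      rw [lintegral_const_mul']
      · congr 1
        have := lintegral_sub_right_eq_self (μ := volume)
          (fun lam : ℝ => ENNReal.ofReal ((1 + |lam|) ^ (2 * θ) * ‖g lam‖ ^ 2)) b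
        rw [hI, ← this]
      · exact ENNReal.ofReal_ne_top
    calc (∫⁻ τ : ℝ, ENNReal.ofReal (A *
          (1 + |abs τ - abs a|) ^ (2 * θ) * (‖g (τ - b)‖ ^ 2 * ‖h ξ‖ ^ 2)))
        ≤ ENNReal.ofReal (A * ‖h ξ‖ ^ 2) * I := step1.trans_eq step2
      _ = I * ENNReal.ofReal (A * ‖h ξ‖ ^ 2) := mul_comm _ _
  calc (∫⁻ ξ : EuclideanSpace ℝ (Fin n), ∫⁻ τ : ℝ,
        ENNReal.ofReal ((1 + ‖ξ‖) ^ (2 * (s - 1)) * (1 + |ξ ⟨0, hn⟩|) ^ (2 : ℕ) *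
          (1 + |abs τ - abs (ξ ⟨0, hn⟩)|) ^ (2 * θ) *
            (‖g (τ - σ * |ξ ⟨0, hn⟩|)‖ ^ 2 * ‖h ξ‖ ^ 2)))
      ≤ ∫⁻ ξ : EuclideanSpace ℝ (Fin n),
          I * ENNReal.ofReal ((1 + ‖ξ‖) ^ (2 * (s - 1)) * (1 + |ξ ⟨0, hn⟩|) ^ (2 : ℕ) *
            ‖h ξ‖ ^ 2) := lintegral_mono key
    _ = I * ∫⁻ ξ : EuclideanSpace ℝ (Fin n),
          ENNReal.ofReal ((1 + ‖ξ‖) ^ (2 * (s - 1)) * (1 + |ξ ⟨0, hn⟩|) ^ (2 : ℕ) *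
            ‖h ξ‖ ^ 2) := by
        apply lintegral_const_mul'' I
        apply Measurable.aemeasurable
        apply Measurable.ennreal_ofReal
        have hc : Continuous fun ξ : EuclideanSpace ℝ (Fin n) =>
            (1 + ‖ξ‖) ^ (2 * (s - 1)) * (1 + |ξ ⟨0, hn⟩|) ^ (2 : ℕ) := by
          apply Continuous.mul
          · exact (continuous_const.add continuous_norm).rpow_const
              (fun x => Or.inl (by positivity : (1:ℝ) + ‖x‖ ≠ 0))
          · exact (continuous_const.add
              (continuous_abs.comp (EuclideanSpace.proj (⟨0, hn⟩ : Fin n)).continuous)).pow 2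
        exact hc.measurable.mul ((hh.norm).pow_const 2)
end

section
/- Let n ≥ 1, s ∈ ℝ, θ > 1/2, m > 0 and r ∈ [−1,1]. There exists a constant C > 0 depending only on θ such that for all measurable g : ℝ → ℂ and all measurable h : ℝⁿ → ℂ vanishing outside {ξ : |ξ₁| < m}, one has ∫_{ℝⁿ} ∫_ℝ (1+|ξ|)^{2(s−1)} (1+|ξ₁|)² (1+||τ|−|ξ₁||)^{2θ} |g(τ − r|ξ₁|)|² |h(ξ)|² dτ dξ ≤ C ( m^{2θ} ∫_ℝ |g(λ)|² dλ + ∫_ℝ (1+|λ|)^{2θ} |g(λ)|² dλ ) · ∫_{ℝⁿ} (1+|ξ|)^{2(s−1)} (1+|ξ₁|)² |h(ξ)|² dξ. -/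
open MeasureTheory

lemma aux_rpow_add_le (y z t : ℝ) (hy : 0 ≤ y) (hz : 0 ≤ z) (ht : 0 ≤ t) :
    (y + z) ^ t ≤ 2 ^ t * (y ^ t + z ^ t) := by
  have h1 : y + z ≤ 2 * max y z := by
    rcases le_total y z with h | h
    · simp [max_eq_right h]; linarith
    · simp [max_eq_left h]; linarith
  have hm : 0 ≤ max y z := le_max_of_le_left hy
  calc (y + z) ^ t ≤ (2 * max y z) ^ t :=
        Real.rpow_le_rpow (by linarith) h1 ht
    _ = 2 ^ t * (max y z) ^ t := Real.mul_rpow (by norm_num) hm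
    _ ≤ 2 ^ t * (y ^ t + z ^ t) := by
        apply mul_le_mul_of_nonneg_left _ (Real.rpow_nonneg (by norm_num) t)
        rcases le_total y z with h | h
        · rw [max_eq_right h]; nlinarith [Real.rpow_nonneg hy t]
        · rw [max_eq_left h]; nlinarith [Real.rpow_nonneg hz t]

/-- Fourier-side form of estimate (cr5) of Lemma 4.2:
`‖χ(t)e^{irtD}f‖_{H^{s-1,1}_θ} ≲ (m^θ ‖χ‖_{L²} + ‖χ‖_{H^θ}) ‖f‖_{H^{s-1,1}}`
for `f` frequency-localized to `|ξ₁| < m` and `r ∈ [-1,1]`. -/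
theorem stmt_8 (θ : ℝ) (hθ : 1 / 2 < θ) :
    ∃ C : ℝ, 0 < C ∧
      ∀ (n : ℕ) (hn : 0 < n) (s m r : ℝ), 0 < m → r ∈ Set.Icc (-1 : ℝ) 1 →
        ∀ (g : ℝ → ℂ) (h : EuclideanSpace ℝ (Fin n) → ℂ),
          Measurable g → Measurable h →
          (∀ ξ : EuclideanSpace ℝ (Fin n), ¬(|ξ ⟨0, hn⟩| < m) → h ξ = 0) →
          (∫⁻ ξ : EuclideanSpace ℝ (Fin n), ∫⁻ τ : ℝ,
              ENNReal.ofReal ((1 + ‖ξ‖) ^ (2 * (s - 1)) * (1 + |ξ ⟨0, hn⟩|) ^ (2 : ℕ) *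
                (1 + |abs τ - abs (ξ ⟨0, hn⟩)|) ^ (2 * θ) *
                  (‖g (τ - r * |ξ ⟨0, hn⟩|)‖ ^ 2 * ‖h ξ‖ ^ 2))) ≤
            ENNReal.ofReal C *
              ((ENNReal.ofReal (m ^ (2 * θ)) *
                  ∫⁻ lam : ℝ, ENNReal.ofReal (‖g lam‖ ^ 2)) +
                ∫⁻ lam : ℝ, ENNReal.ofReal ((1 + |lam|) ^ (2 * θ) * ‖g lam‖ ^ 2)) *
              ∫⁻ ξ : EuclideanSpace ℝ (Fin n),
                ENNReal.ofReal ((1 + ‖ξ‖) ^ (2 * (s - 1)) * (1 + |ξ ⟨0, hn⟩|) ^ (2 : ℕ) *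
                  ‖h ξ‖ ^ 2) := by
  have htpos : (0 : ℝ) ≤ 2 * θ := by linarith
  refine ⟨2 ^ (2 * θ), Real.rpow_pos_of_pos (by norm_num) _, ?_⟩
  intro n hn s m r hm hr g h hg hh hsupp
  set C : ℝ := 2 ^ (2 * θ) with hCdef
  have hC0 : 0 ≤ C := le_of_lt (Real.rpow_pos_of_pos (by norm_num) _)
  -- abbreviations
  set A : ENNReal := ∫⁻ lam : ℝ, ENNReal.ofReal (‖g lam‖ ^ 2) with hA
  set B : ENNReal := ∫⁻ lam : ℝ, ENNReal.ofReal ((1 + |lam|) ^ (2 * θ) * ‖g lam‖ ^ 2) with hB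
  set K : ENNReal := ENNReal.ofReal C * (ENNReal.ofReal (m ^ (2 * θ)) * A + B) with hK
  -- weight on ξ
  set W : EuclideanSpace ℝ (Fin n) → ℝ :=
    fun ξ => (1 + ‖ξ‖) ^ (2 * (s - 1)) * (1 + |ξ ⟨0, hn⟩|) ^ (2 : ℕ) * ‖h ξ‖ ^ 2 with hWdef
  have hWnn : ∀ ξ, 0 ≤ W ξ := by
    intro ξ
    have h1 : (0:ℝ) < 1 + ‖ξ‖ := by positivity
    positivity
  -- inner integral bound
  have key : ∀ ξ : EuclideanSpace ℝ (Fin n),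
      (∫⁻ τ : ℝ, ENNReal.ofReal ((1 + ‖ξ‖) ^ (2 * (s - 1)) * (1 + |ξ ⟨0, hn⟩|) ^ (2 : ℕ) *
        (1 + |abs τ - abs (ξ ⟨0, hn⟩)|) ^ (2 * θ) *
        (‖g (τ - r * |ξ ⟨0, hn⟩|)‖ ^ 2 * ‖h ξ‖ ^ 2))) ≤ K * ENNReal.ofReal (W ξ) := by
    intro ξ
    by_cases hz : h ξ = 0
    · simp [hz, hWdef]
    · have hk : |ξ ⟨0, hn⟩| < m := by
        by_contra hc
        exact hz (hsupp ξ hc)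
      set k : ℝ := ξ ⟨0, hn⟩
      set c : ℝ := r * |k| with hc
      -- pointwise bound on the weight in τ
      have hpt : ∀ τ : ℝ, (1 + |abs τ - abs k|) ^ (2 * θ)
          ≤ C * ((1 + |τ - c|) ^ (2 * θ) + m ^ (2 * θ)) := by
        intro τ
        have hr1 : |r| ≤ 1 := abs_le.2 ⟨hr.1, hr.2⟩
        have habs : |abs τ - abs k| ≤ |τ - c| + m := by
          have h1 : |τ| - |c| ≤ |τ - c| := abs_sub_abs_le_abs_sub τ c
          have h2 : |c| - |τ| ≤ |c - τ| := abs_sub_abs_le_abs_sub c τ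
          have h3 : |c - τ| = |τ - c| := abs_sub_comm c τ
          have h4 : |c| = |r| * |k| := by rw [hc, abs_mul, abs_abs]
          have h5 : |k| ≥ 0 := abs_nonneg k
          rw [abs_sub_le_iff]
          constructor <;> nlinarith [mul_nonneg (abs_nonneg r) h5]
        calc (1 + |abs τ - abs k|) ^ (2 * θ)
            ≤ ((1 + |τ - c|) + m) ^ (2 * θ) := by
              apply Real.rpow_le_rpow (by positivity) (by linarith) htpos
          _ ≤ 2 ^ (2 * θ) * ((1 + |τ - c|) ^ (2 * θ) + m ^ (2 * θ)) :=
              aux_rpow_add_le _ _ _ (by positivity) (le_of_lt hm) htpos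
          _ = C * ((1 + |τ - c|) ^ (2 * θ) + m ^ (2 * θ)) := by rw [hCdef]
      have hWpos : 0 ≤ W ξ := hWnn ξ
      calc (∫⁻ τ : ℝ, ENNReal.ofReal ((1 + ‖ξ‖) ^ (2 * (s - 1)) * (1 + |k|) ^ (2 : ℕ) *
              (1 + |abs τ - abs k|) ^ (2 * θ) * (‖g (τ - c)‖ ^ 2 * ‖h ξ‖ ^ 2)))
          ≤ ∫⁻ τ : ℝ, ENNReal.ofReal (C * W ξ) *
              (ENNReal.ofReal (m ^ (2 * θ) * ‖g (τ - c)‖ ^ 2) +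
               ENNReal.ofReal ((1 + |τ - c|) ^ (2 * θ) * ‖g (τ - c)‖ ^ 2)) := by
            apply lintegral_mono
            intro τ
            dsimp only
            have e1 : ENNReal.ofReal (C * W ξ) *
                (ENNReal.ofReal (m ^ (2 * θ) * ‖g (τ - c)‖ ^ 2) +
                 ENNReal.ofReal ((1 + |τ - c|) ^ (2 * θ) * ‖g (τ - c)‖ ^ 2))
                = ENNReal.ofReal (C * W ξ * (m ^ (2 * θ) * ‖g (τ - c)‖ ^ 2 +
                    (1 + |τ - c|) ^ (2 * θ) * ‖g (τ - c)‖ ^ 2)) := by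
              rw [← ENNReal.ofReal_add (by positivity) (by positivity),
                ← ENNReal.ofReal_mul (by positivity)]
            rw [e1]
            apply ENNReal.ofReal_le_ofReal
            have hb : (1 + ‖ξ‖) ^ (2 * (s - 1)) * (1 + |k|) ^ (2 : ℕ) *
                (1 + |abs τ - abs k|) ^ (2 * θ) * (‖g (τ - c)‖ ^ 2 * ‖h ξ‖ ^ 2)
                ≤ (1 + ‖ξ‖) ^ (2 * (s - 1)) * (1 + |k|) ^ (2 : ℕ) *
                (C * ((1 + |τ - c|) ^ (2 * θ) + m ^ (2 * θ))) *
                (‖g (τ - c)‖ ^ 2 * ‖h ξ‖ ^ 2) := by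
              have h1 : (0:ℝ) < 1 + ‖ξ‖ := by positivity
              have h2 : (0:ℝ) ≤ (1 + ‖ξ‖) ^ (2 * (s - 1)) * (1 + |k|) ^ (2 : ℕ) := by
                positivity
              exact mul_le_mul_of_nonneg_right
                (mul_le_mul_of_nonneg_left (hpt τ) h2)
                (mul_nonneg (sq_nonneg _) (sq_nonneg _))
            calc (1 + ‖ξ‖) ^ (2 * (s - 1)) * (1 + |k|) ^ (2 : ℕ) *
                (1 + |abs τ - abs k|) ^ (2 * θ) * (‖g (τ - c)‖ ^ 2 * ‖h ξ‖ ^ 2)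
                ≤ (1 + ‖ξ‖) ^ (2 * (s - 1)) * (1 + |k|) ^ (2 : ℕ) *
                  (C * ((1 + |τ - c|) ^ (2 * θ) + m ^ (2 * θ))) *
                  (‖g (τ - c)‖ ^ 2 * ‖h ξ‖ ^ 2) := hb
              _ = C * W ξ * (m ^ (2 * θ) * ‖g (τ - c)‖ ^ 2 +
                    (1 + |τ - c|) ^ (2 * θ) * ‖g (τ - c)‖ ^ 2) := by
                  rw [hWdef]; ring
        _ = ENNReal.ofReal (C * W ξ) *
              ∫⁻ τ : ℝ, (ENNReal.ofReal (m ^ (2 * θ) * ‖g (τ - c)‖ ^ 2) +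
               ENNReal.ofReal ((1 + |τ - c|) ^ (2 * θ) * ‖g (τ - c)‖ ^ 2)) := by
            apply lintegral_const_mul
            apply Measurable.fun_add
            · exact (measurable_const.mul
                (((hg.comp (measurable_id.sub measurable_const)).norm.pow
                  measurable_const))).ennreal_ofReal
            · apply Measurable.ennreal_ofReal
              apply Measurable.mul
              · exact ((measurable_const.add
                  (measurable_id.sub measurable_const).abs).pow measurable_const)
              · exact ((hg.comp (measurable_id.sub measurable_const)).norm.pow
                  measurable_const)
        _ = ENNReal.ofReal (C * W ξ) *
              ((∫⁻ τ : ℝ, ENNReal.ofReal (m ^ (2 * θ) * ‖g (τ - c)‖ ^ 2)) +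
               ∫⁻ τ : ℝ, ENNReal.ofReal ((1 + |τ - c|) ^ (2 * θ) * ‖g (τ - c)‖ ^ 2)) := by
            congr 1
            apply lintegral_add_left
            exact (measurable_const.mul
                (((hg.comp (measurable_id.sub measurable_const)).norm.pow
                  measurable_const))).ennreal_ofReal
        _ = ENNReal.ofReal (C * W ξ) * (ENNReal.ofReal (m ^ (2 * θ)) * A + B) := by
            congr 1
            congr 1
            · rw [hA, ← lintegral_const_mul _
                (((hg.norm.pow measurable_const)).ennreal_ofReal)]
              rw [← lintegral_sub_right_eq_self
                (fun τ => ENNReal.ofReal (m ^ (2 * θ)) * ENNReal.ofReal (‖g τ‖ ^ 2)) c]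
              congr 1 with τ
              rw [← ENNReal.ofReal_mul (by positivity)]
            · rw [hB, ← lintegral_sub_right_eq_self
                (fun lam => ENNReal.ofReal ((1 + |lam|) ^ (2 * θ) * ‖g lam‖ ^ 2)) c]
        _ = K * ENNReal.ofReal (W ξ) := by
            rw [hK, ENNReal.ofReal_mul hC0]; ring
  calc (∫⁻ ξ : EuclideanSpace ℝ (Fin n), ∫⁻ τ : ℝ,
          ENNReal.ofReal ((1 + ‖ξ‖) ^ (2 * (s - 1)) * (1 + |ξ ⟨0, hn⟩|) ^ (2 : ℕ) *
            (1 + |abs τ - abs (ξ ⟨0, hn⟩)|) ^ (2 * θ) *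
            (‖g (τ - r * |ξ ⟨0, hn⟩|)‖ ^ 2 * ‖h ξ‖ ^ 2)))
      ≤ ∫⁻ ξ : EuclideanSpace ℝ (Fin n), K * ENNReal.ofReal (W ξ) :=
        lintegral_mono key
    _ = K * ∫⁻ ξ : EuclideanSpace ℝ (Fin n), ENNReal.ofReal (W ξ) := by
        apply lintegral_const_mul
        apply Measurable.ennreal_ofReal
        have hcoord : Measurable (fun ξ : EuclideanSpace ℝ (Fin n) => ξ ⟨0, hn⟩) :=
          (measurable_pi_apply _).comp (WithLp.measurable_ofLp _ _)
        have hnorm : Measurable (fun ξ : EuclideanSpace ℝ (Fin n) => ‖ξ‖) :=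
          measurable_norm
        exact (((measurable_const.add hnorm).pow measurable_const).mul
          ((measurable_const.add hcoord.abs).pow measurable_const)).mul
          (hh.norm.pow measurable_const)
    _ = ENNReal.ofReal C * (ENNReal.ofReal (m ^ (2 * θ)) * A + B) *
          ∫⁻ ξ : EuclideanSpace ℝ (Fin n), ENNReal.ofReal (W ξ) := by rw [hK]
end

section
/- Let n ≥ 1, s ∈ ℝ and θ ∈ (1/2, 1). There exists a constant C > 0 depending only on θ such that for every measurable F : ℝ × ℝⁿ → ℂ vanishing on the set {(τ,ξ) : ||τ|−|ξ₁|| < 1}, the function U(τ,ξ) := F(τ,ξ) / (τ² − ξ₁²) satisfies ( ∫∫ (1+|ξ|)^{2(s−1)} (1+|ξ₁|)² (1+||τ|−|ξ₁||)^{2θ} |U(τ,ξ)|² dτ dξ )^{1/2} + ( ∫∫ (1+|ξ|)^{2(s−1)} (1+||τ|−|ξ₁||)^{2θ} |τ|² |U(τ,ξ)|² dτ dξ )^{1/2} ≤ C ( ∫∫ (1+|ξ|)^{2(s−1)} (1+||τ|−|ξ₁||)^{2(θ−1)} |F(τ,ξ)|² dτ dξ )^{1/2}. -/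
open MeasureTheory

lemma key_frac (b τ : ℝ) (h : 1 ≤ |(|τ| - |b|)|) :
    1 ≤ |τ ^ 2 - b ^ 2| ∧
    (1 + |b|) ^ 2 * (1 + |(|τ| - |b|)|) ^ 2 ≤ 16 * |τ ^ 2 - b ^ 2| ^ 2 ∧
    |τ| ^ 2 * (1 + |(|τ| - |b|)|) ^ 2 ≤ 16 * |τ ^ 2 - b ^ 2| ^ 2 := by
  set d := |(|τ| - |b|)| with hd
  set S := |τ| + |b| with hS0
  have hS : d ≤ S := by
    calc d ≤ |(|τ|)| + |(|b|)| := abs_sub _ _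
    _ = S := by rw [abs_abs, abs_abs]
  have hc : |τ ^ 2 - b ^ 2| = d * S := by
    have he : τ ^ 2 - b ^ 2 = (|τ| - |b|) * (|τ| + |b|) := by
      rw [← sq_abs τ, ← sq_abs b]; ring
    rw [he, abs_mul]
    congr 1
    exact abs_of_nonneg (by positivity)
  have hone : 1 ≤ d * S := by nlinarith
  have h1 : 1 + |b| ≤ 2 * S := by
    have := abs_nonneg τ; have := abs_nonneg b; rw [hS0]; nlinarith
  have h2 : 1 + d ≤ 2 * d := by linarith
  have h3 : |τ| ≤ S := by have := abs_nonneg b; rw [hS0]; linarith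
  have hm1 : (1 + |b|) * (1 + d) ≤ (2 * S) * (2 * d) :=
    mul_le_mul h1 h2 (by positivity) (by positivity)
  have hm2 : |τ| * (1 + d) ≤ S * (2 * d) :=
    mul_le_mul h3 h2 (by positivity) (by positivity)
  refine ⟨by rw [hc]; exact hone, ?_, ?_⟩
  · rw [hc]
    calc (1 + |b|) ^ 2 * (1 + d) ^ 2 = ((1 + |b|) * (1 + d)) ^ 2 := by ring
      _ ≤ ((2 * S) * (2 * d)) ^ 2 := by
          apply pow_le_pow_left₀ (by positivity) hm1
      _ = 16 * (d * S) ^ 2 := by ring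
  · rw [hc]
    calc |τ| ^ 2 * (1 + d) ^ 2 = (|τ| * (1 + d)) ^ 2 := by ring
      _ ≤ (S * (2 * d)) ^ 2 := by
          apply pow_le_pow_left₀ (by positivity) hm2
      _ = 4 * (d * S) ^ 2 := by ring
      _ ≤ 16 * (d * S) ^ 2 := by nlinarith [sq_nonneg (d * S)]

lemma key1 (θ A τ b : ℝ) (hA : 0 ≤ A) (z : ℂ) (hz : |(|τ| - |b|)| < 1 → z = 0) :
    A * (1 + |b|) ^ (2 : ℕ) * (1 + |(|τ| - |b|)|) ^ (2 * θ) *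
      ‖z / ((τ ^ 2 - b ^ 2 : ℝ) : ℂ)‖ ^ 2
      ≤ 16 * (A * (1 + |(|τ| - |b|)|) ^ (2 * (θ - 1)) * ‖z‖ ^ 2) := by
  by_cases h : |(|τ| - |b|)| < 1
  · rw [hz h]; simp
  push_neg at h
  set d := |(|τ| - |b|)| with hdd
  have hd0 : (0:ℝ) < 1 + d := by linarith
  have hD : (1 + d) ^ (2 * θ) = (1 + d) ^ (2 * (θ - 1)) * (1 + d) ^ 2 := by
    rw [show 2 * θ = 2 * (θ - 1) + ((2:ℕ):ℝ) by push_cast; ring,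
      Real.rpow_add hd0, Real.rpow_natCast]
  obtain ⟨hk0, hk1, _⟩ := key_frac b τ h
  have hcpos : (0:ℝ) < |τ ^ 2 - b ^ 2| := lt_of_lt_of_le one_pos hk0
  have hnorm : ‖z / ((τ ^ 2 - b ^ 2 : ℝ) : ℂ)‖ ^ 2 = ‖z‖ ^ 2 / |τ ^ 2 - b ^ 2| ^ 2 := by
    rw [norm_div, div_pow, Complex.norm_real, Real.norm_eq_abs]
  rw [hnorm, hD]
  have hfrac : (1 + |b|) ^ 2 * (1 + d) ^ 2 / |τ ^ 2 - b ^ 2| ^ 2 ≤ 16 := by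
    rw [div_le_iff₀ (by positivity)]
    linarith
  calc A * (1 + |b|) ^ (2:ℕ) * ((1 + d) ^ (2 * (θ - 1)) * (1 + d) ^ 2) *
        (‖z‖ ^ 2 / |τ ^ 2 - b ^ 2| ^ 2)
      = ((1 + |b|) ^ 2 * (1 + d) ^ 2 / |τ ^ 2 - b ^ 2| ^ 2) *
        (A * (1 + d) ^ (2 * (θ - 1)) * ‖z‖ ^ 2) := by ring
    _ ≤ 16 * (A * (1 + d) ^ (2 * (θ - 1)) * ‖z‖ ^ 2) := by
        apply mul_le_mul_of_nonneg_right hfrac; positivity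

lemma key2 (θ A τ b : ℝ) (hA : 0 ≤ A) (z : ℂ) (hz : |(|τ| - |b|)| < 1 → z = 0) :
    A * (1 + |(|τ| - |b|)|) ^ (2 * θ) * |τ| ^ (2 : ℕ) *
      ‖z / ((τ ^ 2 - b ^ 2 : ℝ) : ℂ)‖ ^ 2
      ≤ 16 * (A * (1 + |(|τ| - |b|)|) ^ (2 * (θ - 1)) * ‖z‖ ^ 2) := by
  by_cases h : |(|τ| - |b|)| < 1
  · rw [hz h]; simp
  push_neg at h
  set d := |(|τ| - |b|)| with hdd
  have hd0 : (0:ℝ) < 1 + d := by linarith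
  have hD : (1 + d) ^ (2 * θ) = (1 + d) ^ (2 * (θ - 1)) * (1 + d) ^ 2 := by
    rw [show 2 * θ = 2 * (θ - 1) + ((2:ℕ):ℝ) by push_cast; ring,
      Real.rpow_add hd0, Real.rpow_natCast]
  obtain ⟨hk0, _, hk2⟩ := key_frac b τ h
  have hcpos : (0:ℝ) < |τ ^ 2 - b ^ 2| := lt_of_lt_of_le one_pos hk0
  have hnorm : ‖z / ((τ ^ 2 - b ^ 2 : ℝ) : ℂ)‖ ^ 2 = ‖z‖ ^ 2 / |τ ^ 2 - b ^ 2| ^ 2 := by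
    rw [norm_div, div_pow, Complex.norm_real, Real.norm_eq_abs]
  rw [hnorm, hD]
  have hfrac : |τ| ^ 2 * (1 + d) ^ 2 / |τ ^ 2 - b ^ 2| ^ 2 ≤ 16 := by
    rw [div_le_iff₀ (by positivity)]
    linarith
  calc A * ((1 + d) ^ (2 * (θ - 1)) * (1 + d) ^ 2) * |τ| ^ (2:ℕ) *
        (‖z‖ ^ 2 / |τ ^ 2 - b ^ 2| ^ 2)
      = (|τ| ^ 2 * (1 + d) ^ 2 / |τ ^ 2 - b ^ 2| ^ 2) *
        (A * (1 + d) ^ (2 * (θ - 1)) * ‖z‖ ^ 2) := by ring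
    _ ≤ 16 * (A * (1 + d) ^ (2 * (θ - 1)) * ‖z‖ ^ 2) := by
        apply mul_le_mul_of_nonneg_right hfrac; positivity

lemma sqrt16 : (ENNReal.ofReal 16) ^ (1/2 : ℝ) = ENNReal.ofReal 4 := by
  rw [ENNReal.ofReal_rpow_of_pos (by norm_num : (0:ℝ) < 16)]
  congr 1
  rw [show (16:ℝ) = 4 ^ (2:ℕ) by norm_num, ← Real.rpow_natCast 4 2,
    ← Real.rpow_mul (by norm_num : (0:ℝ) ≤ 4)]
  norm_num


/-- Fourier-side form of Lemma 4.3: if `F` vanishes near the cone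
`|τ| = |ξ₁|`, then `u = □⁻¹F` (with `Û = F̃/(τ²-ξ₁²)`) satisfies
`‖u‖_{H^{s-1,1}_θ} + ‖∂ₜu‖_{H^{s-1,0}_θ} ≲ ‖F‖_{H^{s-1,0}_{θ-1}}`. -/
theorem stmt_10 (θ : ℝ) (hθ1 : 1 / 2 < θ) (hθ2 : θ < 1) :
    ∃ C : ℝ, 0 < C ∧
      ∀ (n : ℕ) (hn : 0 < n) (s : ℝ)
        (F : ℝ × EuclideanSpace ℝ (Fin n) → ℂ), Measurable F →
        (∀ τ (ξ : EuclideanSpace ℝ (Fin n)),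
          |abs τ - abs (ξ ⟨0, hn⟩)| < 1 → F (τ, ξ) = 0) →
        (∫⁻ ξ : EuclideanSpace ℝ (Fin n), ∫⁻ τ : ℝ,
            ENNReal.ofReal ((1 + ‖ξ‖) ^ (2 * (s - 1)) * (1 + |ξ ⟨0, hn⟩|) ^ (2 : ℕ) *
              (1 + |abs τ - abs (ξ ⟨0, hn⟩)|) ^ (2 * θ) *
                ‖F (τ, ξ) / ((τ ^ 2 - (ξ ⟨0, hn⟩) ^ 2 : ℝ) : ℂ)‖ ^ 2)) ^ (1 / 2 : ℝ) +
          (∫⁻ ξ : EuclideanSpace ℝ (Fin n), ∫⁻ τ : ℝ,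
            ENNReal.ofReal ((1 + ‖ξ‖) ^ (2 * (s - 1)) *
              (1 + |abs τ - abs (ξ ⟨0, hn⟩)|) ^ (2 * θ) * |τ| ^ (2 : ℕ) *
                ‖F (τ, ξ) / ((τ ^ 2 - (ξ ⟨0, hn⟩) ^ 2 : ℝ) : ℂ)‖ ^ 2)) ^ (1 / 2 : ℝ) ≤
          ENNReal.ofReal C *
            (∫⁻ ξ : EuclideanSpace ℝ (Fin n), ∫⁻ τ : ℝ,
              ENNReal.ofReal ((1 + ‖ξ‖) ^ (2 * (s - 1)) *
                (1 + |abs τ - abs (ξ ⟨0, hn⟩)|) ^ (2 * (θ - 1)) *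
                  ‖F (τ, ξ)‖ ^ 2)) ^ (1 / 2 : ℝ) := by
  refine ⟨8, by norm_num, ?_⟩
  intro n hn s F _hF hsupp
  set R := ∫⁻ ξ : EuclideanSpace ℝ (Fin n), ∫⁻ τ : ℝ,
      ENNReal.ofReal ((1 + ‖ξ‖) ^ (2 * (s - 1)) *
        (1 + |abs τ - abs (ξ ⟨0, hn⟩)|) ^ (2 * (θ - 1)) * ‖F (τ, ξ)‖ ^ 2) with hR
  have hmul :
      (∫⁻ ξ : EuclideanSpace ℝ (Fin n), ∫⁻ τ : ℝ,
        ENNReal.ofReal 16 * ENNReal.ofReal ((1 + ‖ξ‖) ^ (2 * (s - 1)) *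
          (1 + |abs τ - abs (ξ ⟨0, hn⟩)|) ^ (2 * (θ - 1)) * ‖F (τ, ξ)‖ ^ 2))
        = ENNReal.ofReal 16 * R := by
    simp_rw [lintegral_const_mul' (ENNReal.ofReal 16) _ ENNReal.ofReal_ne_top]
    rfl
  have h1 : (∫⁻ ξ : EuclideanSpace ℝ (Fin n), ∫⁻ τ : ℝ,
      ENNReal.ofReal ((1 + ‖ξ‖) ^ (2 * (s - 1)) * (1 + |ξ ⟨0, hn⟩|) ^ (2 : ℕ) *
        (1 + |abs τ - abs (ξ ⟨0, hn⟩)|) ^ (2 * θ) *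
          ‖F (τ, ξ) / ((τ ^ 2 - (ξ ⟨0, hn⟩) ^ 2 : ℝ) : ℂ)‖ ^ 2))
      ≤ ENNReal.ofReal 16 * R := by
    rw [← hmul]
    refine lintegral_mono fun ξ => lintegral_mono fun τ => ?_
    rw [← ENNReal.ofReal_mul (by norm_num : (0:ℝ) ≤ 16)]
    refine ENNReal.ofReal_le_ofReal ?_
    have := key1 θ ((1 + ‖ξ‖) ^ (2 * (s - 1))) τ (ξ ⟨0, hn⟩) (by positivity)
      (F (τ, ξ)) (hsupp τ ξ)
    linarith [this]
  have h2 : (∫⁻ ξ : EuclideanSpace ℝ (Fin n), ∫⁻ τ : ℝ,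
      ENNReal.ofReal ((1 + ‖ξ‖) ^ (2 * (s - 1)) *
        (1 + |abs τ - abs (ξ ⟨0, hn⟩)|) ^ (2 * θ) * |τ| ^ (2 : ℕ) *
          ‖F (τ, ξ) / ((τ ^ 2 - (ξ ⟨0, hn⟩) ^ 2 : ℝ) : ℂ)‖ ^ 2))
      ≤ ENNReal.ofReal 16 * R := by
    rw [← hmul]
    refine lintegral_mono fun ξ => lintegral_mono fun τ => ?_
    rw [← ENNReal.ofReal_mul (by norm_num : (0:ℝ) ≤ 16)]
    refine ENNReal.ofReal_le_ofReal ?_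
    have := key2 θ ((1 + ‖ξ‖) ^ (2 * (s - 1))) τ (ξ ⟨0, hn⟩) (by positivity)
      (F (τ, ξ)) (hsupp τ ξ)
    linarith [this]
  have hsplit : (ENNReal.ofReal 16 * R) ^ (1/2 : ℝ)
      = ENNReal.ofReal 4 * R ^ (1/2 : ℝ) := by
    rw [ENNReal.mul_rpow_of_nonneg _ _ (by norm_num : (0:ℝ) ≤ 1/2), sqrt16]
  calc _ ≤ (ENNReal.ofReal 16 * R) ^ (1/2 : ℝ) + (ENNReal.ofReal 16 * R) ^ (1/2 : ℝ) := by
        gcongr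
    _ = ENNReal.ofReal 8 * R ^ (1/2 : ℝ) := by
        rw [hsplit, ← add_mul, ← ENNReal.ofReal_add (by norm_num) (by norm_num)]
        norm_num
end
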